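/- arXiv:2103.05486 — 4 statements merged into one kernel-verified Lean document; each statement's English description precedes it below -/
import Mathlib

section
/- Let M = (Q,Σ,Γ,δ,q₀,F) be a deterministic one-tape Turing machine that performs at most k computation steps on each tape cell, for a constant k. Then there exists a weight-reducing deterministic one-tape Turing machine M' with the same state set Q and working alphabet of size at most |Σ|+1 + k·|Γ|, such that M' accepts the same language as M, and there is a time- and space-preserving bijection between computations of M and computations of M'. -/
/-- A deterministic one-tape Turing machine over input alphabet `A`,
states `Q`, working alphabet `Γ`. -/
structure DTM (A Q Γ : Type*) where
  /-- embedding of input symbols into the working alphabet -/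
  embed : A → Γ
  /-- the blank symbol -/
  blank : Γ
  /-- the initial state -/
  q0 : Q
  /-- the set of final states -/
  F : Set Q
  /-- the partial transition function; `true` means a right move -/
  δ : Q → Γ → Option (Q × Γ × Bool)

/-- A configuration: current state, tape contents, head position. -/
structure TMCfg (Q Γ : Type*) where
  state : Q
  tape : ℤ → Γ
  head : ℤ

namespace DTM

variable {A Q Γ : Type*}

/-- One computation step (partial). -/
def stepCfg (M : DTM A Q Γ) (c : TMCfg Q Γ) : Option (TMCfg Q Γ) :=
  (M.δ c.state (c.tape c.head)).map (fun t =>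
    ⟨t.1, Function.update c.tape c.head t.2.1,
      if t.2.2 then c.head + 1 else c.head - 1⟩)

/-- Initial tape contents on input `w`: the input occupies cells `0,…,|w|-1`,
all other cells are blank. -/
def initTape (M : DTM A Q Γ) (w : List A) : ℤ → Γ :=
  fun i => if 0 ≤ i then (w.map M.embed).getD i.toNat M.blank else M.blank

/-- The initial configuration on input `w`. -/
def initCfg (M : DTM A Q Γ) (w : List A) : TMCfg Q Γ :=
  ⟨M.q0, M.initTape w, 0⟩

/-- The configuration reached after `n` steps on input `w` (`none` if the
machine halted earlier). -/
def run (M : DTM A Q Γ) (w : List A) : ℕ → Option (TMCfg Q Γ)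
  | 0 => some (M.initCfg w)
  | n + 1 => (M.run w n).bind M.stepCfg

/-- `M` accepts `w` if its computation on `w` halts in a final state. -/
def Accepts (M : DTM A Q Γ) (w : List A) : Prop :=
  ∃ n c, M.run w n = some c ∧ M.stepCfg c = none ∧ c.state ∈ M.F

/-- The language accepted by `M`. -/
def lang (M : DTM A Q Γ) : Language A := { w | M.Accepts w }

/-- `M` is weight-reducing: there is a strict partial order on `Γ` such that
every transition rewrites the scanned symbol with a strictly smaller one. -/
def WeightReducing (M : DTM A Q Γ) : Prop :=
  ∃ lt : Γ → Γ → Prop, IsStrictOrder Γ lt ∧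
    ∀ p σ q τ d, M.δ p σ = some (q, τ, d) → lt τ σ

/-- The set of time instants at which the computation of `M` on `w` visits
(i.e. has its head scanning) the tape cell `i`. -/
def visits (M : DTM A Q Γ) (w : List A) (i : ℤ) : Set ℕ :=
  { n | ∃ c, M.run w n = some c ∧ c.head = i }

/-- The computation of `M` on `w` is infinite. -/
def InfiniteOn (M : DTM A Q Γ) (w : List A) : Prop :=
  ∀ n, (M.run w n).isSome

end DTM

/-- The set of time instants at which a computation step is performed with the
head on cell `i`. -/
def DTM.stepsAt {A Q Γ : Type*} (M : DTM A Q Γ) (w : List A) (i : ℤ) : Set ℕ :=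
  { n | ∃ c, M.run w n = some c ∧ c.head = i ∧ (M.stepCfg c).isSome }

/-!
Each cell of `M'` carries a countdown: input and blank symbols have weight `k`, and a step on a
cell of weight `r` writes the image of `M`'s new symbol with counter `r - 1`. Decoding the tape of
`M'` gives the tape of `M`, and the weight of a cell is `k` minus the number of steps `M` has
already made there. Since `M` makes at most `k` steps per cell, the weight is positive whenever
`M` is about to step, so `M'` follows `M` step by step, with the same states and head positions,
while every rewriting strictly lowers the weight.
-/

namespace Option.Rel

variable {α β : Type*} {r : α → β → Prop} {a : Option α} {b : Option β}

lemma isSome_iff (h : Option.Rel r a b) : b.isSome ↔ a.isSome := by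
  cases h <;> rfl

lemma exists_of_eq_some_left {x : α} (h : Option.Rel r a b) (hx : a = Option.some x) :
    ∃ y, b = Option.some y ∧ r x y := by
  subst hx
  cases h
  exact ⟨_, rfl, ‹_›⟩

lemma exists_of_eq_some_right {y : β} (h : Option.Rel r a b) (hy : b = Option.some y) :
    ∃ x, a = Option.some x ∧ r x y := by
  subst hy
  cases h
  exact ⟨_, rfl, ‹_›⟩

end Option.Rel

namespace DTM

variable {A Q Γ : Type*}

section Runs

variable {Γ' : Type*} (M : DTM A Q Γ) (w : List A)

lemma run_succ_of_run_eq_some {n : ℕ} {c : TMCfg Q Γ} (h : M.run w n = some c) :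
    M.run w (n + 1) = M.stepCfg c := by
  simp [run, h]

lemma accepts_iff_exists_run :
    M.Accepts w ↔ ∃ n c, M.run w n = some c ∧ M.run w (n + 1) = none ∧ c.state ∈ M.F := by
  refine exists_congr fun n => exists_congr fun c => ?_
  constructor
  · rintro ⟨hc, hstep, hF⟩
    exact ⟨hc, by rw [M.run_succ_of_run_eq_some w hc, hstep], hF⟩
  · rintro ⟨hc, hhalt, hF⟩
    exact ⟨hc, by rwa [← M.run_succ_of_run_eq_some w hc], hF⟩

variable {M w} {N : DTM A Q Γ'} {R : ℕ → TMCfg Q Γ → TMCfg Q Γ' → Prop}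

lemma accepts_iff_of_rel (hR : ∀ n c c', R n c c' → c'.state = c.state) (hF : N.F = M.F)
    (h : ∀ n, Option.Rel (R n) (M.run w n) (N.run w n)) : N.Accepts w ↔ M.Accepts w := by
  rw [accepts_iff_exists_run, accepts_iff_exists_run, hF]
  refine exists_congr fun n => ⟨?_, ?_⟩
  · rintro ⟨c', hc', hhalt, hF'⟩
    obtain ⟨c, hc, hRc⟩ := (h n).exists_of_eq_some_right hc'
    refine ⟨c, hc, ?_, hR n c c' hRc ▸ hF'⟩
    simpa [hhalt] using (h (n + 1)).isSome_iff
  · rintro ⟨c, hc, hhalt, hF'⟩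
    obtain ⟨c', hc', hRc⟩ := (h n).exists_of_eq_some_left hc
    refine ⟨c', hc', ?_, (hR n c c' hRc).symm ▸ hF'⟩
    simpa [hhalt] using (h (n + 1)).isSome_iff

end Runs

section StepCounts

variable (M : DTM A Q Γ) (w : List A)

open Classical in
noncomputable def countStepsAt (i : ℤ) (n : ℕ) : ℕ :=
  ((Finset.range n).filter (· ∈ M.stepsAt w i)).card

variable {M w}

lemma mem_stepsAt_iff {n : ℕ} {c : TMCfg Q Γ} {i : ℤ} (hc : M.run w n = some c) :
    n ∈ M.stepsAt w i ↔ c.head = i ∧ (M.stepCfg c).isSome := by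
  simp [stepsAt, hc]

lemma countStepsAt_zero (i : ℤ) : M.countStepsAt w i 0 = 0 := by
  simp [countStepsAt]

lemma countStepsAt_succ_of_run {n : ℕ} {c : TMCfg Q Γ} (hc : M.run w n = some c)
    (hstep : (M.stepCfg c).isSome) :
    (M.countStepsAt w · (n + 1)) =
      Function.update (M.countStepsAt w · n) c.head (M.countStepsAt w c.head n + 1) := by
  classical
  funext i
  rcases eq_or_ne i c.head with rfl | hi
  · simp [countStepsAt, Finset.range_add_one, Finset.filter_insert, mem_stepsAt_iff hc, hstep]
  · simp [countStepsAt, Finset.range_add_one, Finset.filter_insert, mem_stepsAt_iff hc, hi,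
      Ne.symm hi]

lemma countStepsAt_lt {i : ℤ} {k n : ℕ} (hfin : (M.stepsAt w i).Finite)
    (hcard : (M.stepsAt w i).ncard ≤ k) (hn : n ∈ M.stepsAt w i) :
    M.countStepsAt w i n < k := by
  classical
  have hsub : (↑(insert n ((Finset.range n).filter (· ∈ M.stepsAt w i))) : Set ℕ) ⊆
      M.stepsAt w i := by
    intro m hm
    simp only [Finset.coe_insert, Finset.coe_filter, Set.mem_insert_iff] at hm
    rcases hm with rfl | ⟨-, hm⟩
    exacts [hn, hm]
  calc M.countStepsAt w i n
      < (insert n ((Finset.range n).filter (· ∈ M.stepsAt w i))).card := by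
        rw [Finset.card_insert_of_notMem (by simp)]
        simp [countStepsAt]
    _ ≤ (M.stepsAt w i).ncard := by
        rw [← Set.ncard_coe_finset]
        exact Set.ncard_le_ncard hsub hfin
    _ ≤ k := hcard

end StepCounts

/-- The paper's alphabet `Σ ∪ {␣} ∪ Γ × {0, …, k-1}`, built on copies `α ≃ Σ` and `β ≃ Γ` so that
it can live in `Type`. -/
abbrev CountdownSymbol (α β : Type*) (k : ℕ) := α ⊕ Unit ⊕ β × Fin k

namespace CountdownSymbol

variable {α β : Type*} {k : ℕ}

def weight : CountdownSymbol α β k → ℕ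
  | .inl _ | .inr (.inl _) => k
  | .inr (.inr (_, i)) => i

lemma weight_le (σ : CountdownSymbol α β k) : σ.weight ≤ k := by
  rcases σ with _ | _ | ⟨_, i⟩
  exacts [le_rfl, le_rfl, i.is_lt.le]

def decode (M : DTM A Q Γ) (eA : A ≃ α) (eG : Γ ≃ β) : CountdownSymbol α β k → Γ
  | .inl a => M.embed (eA.symm a)
  | .inr (.inl _) => M.blank
  | .inr (.inr (b, _)) => eG.symm b

lemma card [Fintype α] [Fintype β] :
    Fintype.card (CountdownSymbol α β k) = Fintype.card α + 1 + k * Fintype.card β := by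
  simp only [Fintype.card_sum, Fintype.card_unit, Fintype.card_prod, Fintype.card_fin]
  ring

end CountdownSymbol

open CountdownSymbol

variable {α β : Type*}

def countdown (M : DTM A Q Γ) (eA : A ≃ α) (eG : Γ ≃ β) (k : ℕ) :
    DTM A Q (CountdownSymbol α β k) where
  embed a := .inl (eA a)
  blank := .inr (.inl ())
  q0 := M.q0
  F := M.F
  δ q σ :=
    if h : 0 < σ.weight then
      (M.δ q (σ.decode M eA eG)).map fun (p, τ, d) =>
        (p, .inr (.inr (eG τ, ⟨σ.weight - 1, by have := σ.weight_le; omega⟩)), d)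
    else none

theorem weightReducing_countdown (M : DTM A Q Γ) (eA : A ≃ α) (eG : Γ ≃ β) (k : ℕ) :
    (M.countdown eA eG k).WeightReducing := by
  refine ⟨fun τ σ => τ.weight < σ.weight,
    { irrefl := fun _ => lt_irrefl _, trans := fun _ _ _ => lt_trans }, ?_⟩
  intro p σ q τ d h
  simp only [countdown] at h
  split_ifs at h with hpos
  obtain ⟨_, -, hτ⟩ := Option.map_eq_some_iff.mp h
  obtain ⟨-, rfl, -⟩ := Prod.ext_iff.mp hτ
  change σ.weight - 1 < σ.weight
  omega

section Simulation

variable (M : DTM A Q Γ) (eA : A ≃ α) (eG : Γ ≃ β) {k : ℕ}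

structure Simulates (used : ℤ → ℕ) (c : TMCfg Q Γ) (c' : TMCfg Q (CountdownSymbol α β k)) :
    Prop where
  state_eq : c'.state = c.state
  head_eq : c'.head = c.head
  decode_tape : ∀ i, (c'.tape i).decode M eA eG = c.tape i
  weight_add_used : ∀ i, (c'.tape i).weight + used i = k

variable {M eA eG}

lemma Simulates.stepCfg {used : ℤ → ℕ} {c : TMCfg Q Γ} {c' : TMCfg Q (CountdownSymbol α β k)}
    (h : Simulates M eA eG used c c') (hbudget : (M.stepCfg c).isSome → used c.head < k) :
    Option.Rel (Simulates M eA eG (Function.update used c.head (used c.head + 1)))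
      (M.stepCfg c) ((M.countdown eA eG k).stepCfg c') := by
  obtain ⟨hq, hh, hdec, hw⟩ := h
  have hδ : (M.countdown eA eG k).δ c'.state (c'.tape c'.head) =
      if h : 0 < (c'.tape c'.head).weight then
        (M.δ c.state (c.tape c.head)).map fun (p, τ, d) =>
          (p, .inr (.inr (eG τ, ⟨(c'.tape c'.head).weight - 1,
            by have := (c'.tape c'.head).weight_le; omega⟩)), d)
      else none := by
    simp only [countdown, hq, hh, hdec]
  rcases hM : M.δ c.state (c.tape c.head) with _ | ⟨p, τ, d⟩
  · simp only [DTM.stepCfg, hδ, hM, Option.map_none, dite_eq_ite, ite_self]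
    exact .none
  · have hpos : 0 < (c'.tape c'.head).weight := by
      have := hbudget (by simp [DTM.stepCfg, hM])
      have := hw c.head
      rw [hh]
      omega
    simp only [DTM.stepCfg, hδ, hM, dif_pos hpos, Option.map_some]
    refine .some ⟨rfl, by simp [hh], fun i => ?_, fun i => ?_⟩
    · rcases eq_or_ne i c.head with rfl | hi
      · simp [hh, decode]
      · simp [hh, hi, hdec]
    · rcases eq_or_ne i c.head with rfl | hi
      · have := hw c.head
        rw [hh] at hpos
        simp only [hh, Function.update_self]
        change (c'.tape c.head).weight - 1 + (used c.head + 1) = k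
        omega
      · simp [hh, hi, hw]

lemma simulates_initCfg (w : List A) :
    Simulates M eA eG (fun _ => 0) (M.initCfg w) ((M.countdown eA eG k).initCfg w) := by
  have hcell : ∀ i, ((M.countdown eA eG k).initTape w i).decode M eA eG = M.initTape w i ∧
      ((M.countdown eA eG k).initTape w i).weight = k := by
    intro i
    unfold DTM.initTape
    split
    · simp only [List.getD_eq_getElem?_getD, List.getElem?_map]
      rcases w[i.toNat]? with _ | a <;> simp [countdown, decode, weight]
    · simp [countdown, decode, weight]
  exact ⟨rfl, rfl, fun i => (hcell i).1, fun i => (hcell i).2⟩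

theorem simulates_run
    (hk : ∀ w i, (M.stepsAt w i).Finite ∧ (M.stepsAt w i).ncard ≤ k) (w : List A) (n : ℕ) :
    Option.Rel (Simulates M eA eG (M.countStepsAt w · n))
      (M.run w n) ((M.countdown eA eG k).run w n) := by
  induction n with
  | zero =>
    simp only [countStepsAt_zero]
    exact .some (simulates_initCfg w)
  | succ n ih =>
    rcases hc : M.run w n with _ | c
    · have hc' : (M.countdown eA eG k).run w n = none := by
        simpa [hc] using ih.isSome_iff
      simp only [run, hc, hc', Option.bind_none]
      exact .none
    obtain ⟨c', hc', hsim⟩ := ih.exists_of_eq_some_left hc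
    rw [run_succ_of_run_eq_some _ _ hc, run_succ_of_run_eq_some _ _ hc']
    have hnext := hsim.stepCfg fun hstep =>
      countStepsAt_lt (hk w c.head).1 (hk w c.head).2 ((mem_stepsAt_iff hc).mpr ⟨rfl, hstep⟩)
    by_cases hstep : (M.stepCfg c).isSome
    · rwa [countStepsAt_succ_of_run hc hstep]
    · have hhalt : M.stepCfg c = none := Option.not_isSome_iff_eq_none.mp hstep
      have hhalt' : (M.countdown eA eG k).stepCfg c' = none := by
        simpa [hhalt] using hnext.isSome_iff
      rw [hhalt, hhalt']
      exact .none

end Simulation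

end DTM

open DTM in
/-- A DTM performing at most `k` steps on each tape cell can be turned into an
equivalent weight-reducing DTM with the same states, a working alphabet of size
at most `|Σ|+1+k·|Γ|`, and a time- and space-preserving correspondence between
computations. -/
theorem stmt5 {A Q Γ : Type*} [Fintype A] [Fintype Γ] (M : DTM A Q Γ) (k : ℕ)
    (hk : ∀ (w : List A) (i : ℤ),
      (M.stepsAt w i).Finite ∧ (M.stepsAt w i).ncard ≤ k) :
    ∃ (Γ' : Type) (_ : Fintype Γ') (M' : DTM A Q Γ'),
      M'.WeightReducing ∧
      Fintype.card Γ' ≤ Fintype.card A + 1 + k * Fintype.card Γ ∧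
      M'.lang = M.lang ∧
      (∀ (w : List A) (n : ℕ), (M'.run w n).isSome ↔ (M.run w n).isSome) ∧
      (∀ (w : List A) (n : ℕ) (c : TMCfg Q Γ) (c' : TMCfg Q Γ'),
        M.run w n = some c → M'.run w n = some c' → c'.head = c.head) := by
  let eA := Fintype.equivFin A
  let eG := Fintype.equivFin Γ
  have hsim := simulates_run (eA := eA) (eG := eG) hk
  refine ⟨CountdownSymbol (Fin (Fintype.card A)) (Fin (Fintype.card Γ)) k, inferInstance,
    M.countdown eA eG k, weightReducing_countdown M eA eG k,
    (by rw [CountdownSymbol.card, Fintype.card_fin, Fintype.card_fin]),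
    ?_, fun w n => (hsim w n).isSome_iff, ?_⟩
  · ext w
    exact accepts_iff_of_rel (fun _ _ _ => Simulates.state_eq) rfl (hsim w)
  · intro w n c c' hc hc'
    obtain ⟨c'', hc'', hcc''⟩ := (hsim w n).exists_of_eq_some_left hc
    rw [hc', Option.some_inj] at hc''
    exact hc'' ▸ hcc''.head_eq
end

section
/- For every n ≥ 0, every deterministic finite automaton accepting the language B_n has at least 2^{2^n} states, where B_n over alphabet {0,1,$} consists of the strings v₁$v₂$...$v_k with k > 2, vᵢ ∈ {0,1}*, |v_k| ≤ n, |vᵢ| ≥ |v_k| for all i < k, and v_j = v_k for some j < k. -/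
/-!
A word `w` is sent to the left quotient `{u | w ++ u ∈ Bₙ}`, and a DFA state determines the left
quotient of every word leading to it. Encode a set `T` of length-`n` blocks as the word listing
them, after two padding blocks of length `n + 1`; these make the encoding have more than two
blocks and are longer than, hence different from, every length-`n` block. Appending `$v` with
`|v| = n` then yields a word of `Bₙ` exactly when `v ∈ T`, so the `2^(2^n)` sets `T` have pairwise
distinct left quotients and must reach pairwise distinct states.
-/

/-- The language `Bₙ` over `{0,1,$}` (here `$` is `none` and a bit `b` is
`some b`): strings `v₁$v₂$⋯$v_k` with `k > 2`, `|v_k| ≤ n`, `|vᵢ| ≥ |v_k|`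
for `i < k`, and `v_j = v_k` for some `j < k`. -/
def Bn (n : ℕ) : Set (List (Option Bool)) :=
  { w | ∃ vs : List (List Bool), 2 < vs.length ∧
      w = List.intercalate [(none : Option Bool)] (vs.map (fun v => v.map some)) ∧
      ∃ h : vs ≠ [],
        (vs.getLast h).length ≤ n ∧
        (∀ v ∈ vs.dropLast, (vs.getLast h).length ≤ v.length) ∧
        vs.getLast h ∈ vs.dropLast }

open Function

theorem List.intercalate_append_singleton {α : Type*} {sep l : List α} {ls : List (List α)}
    (hls : ls ≠ []) : sep.intercalate (ls ++ [l]) = sep.intercalate ls ++ sep ++ l := by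
  induction ls with
  | nil => contradiction
  | cons a ls ih =>
    cases ls with
    | nil => simp
    | cons b ls => simpa using ih (List.cons_ne_nil _ _)

theorem DFA.card_le_of_injective_leftQuotient {α σ ι : Type*} [Fintype σ] [Fintype ι]
    (M : DFA α σ) (x : ι → List α) (hx : Injective (M.accepts.leftQuotient ∘ x)) :
    Fintype.card ι ≤ Fintype.card σ := by
  rw [Language.leftQuotient_accepts] at hx
  exact Fintype.card_le_of_injective _ (Injective.of_comp (f := M.acceptsFrom) hx)

def joinBlocks (vs : List (List Bool)) : List (Option Bool) :=
  [none].intercalate (vs.map (List.map some))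

theorem joinBlocks_injective {vs ws : List (List Bool)} (hvs : vs ≠ []) (hws : ws ≠ [])
    (h : joinBlocks vs = joinBlocks ws) : vs = ws := by
  have hsplit := congrArg (List.splitOn none) h
  rw [joinBlocks, joinBlocks, List.splitOn_intercalate _ (by simp) (by simpa),
    List.splitOn_intercalate _ (by simp) (by simpa)] at hsplit
  exact List.map_injective_iff.2 (List.map_injective_iff.2 (Option.some_injective _)) hsplit

theorem joinBlocks_append_singleton {vs : List (List Bool)} (hvs : vs ≠ []) (v : List Bool) :
    joinBlocks (vs ++ [v]) = joinBlocks vs ++ none :: v.map some := by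
  simp [joinBlocks, List.intercalate_append_singleton (List.map_eq_nil_iff.not.2 hvs)]

theorem joinBlocks_append_singleton_mem_Bn_iff {n : ℕ} (vs : List (List Bool)) (v : List Bool) :
    joinBlocks (vs ++ [v]) ∈ Bn n ↔
      2 ≤ vs.length ∧ v.length ≤ n ∧ (∀ u ∈ vs, v.length ≤ u.length) ∧ v ∈ vs := by
  constructor
  · rintro ⟨ws, hlen, hw, hne, hle, hmin, hmem⟩
    obtain rfl := joinBlocks_injective (by simp) hne hw
    simp_all
  · rintro ⟨hlen, hle, hmin, hmem⟩
    exact ⟨vs ++ [v], by simpa using hlen, rfl, by simp, by simpa, by simpa, by simpa⟩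

noncomputable def setBlocks (n : ℕ) (T : Finset (Fin n → Bool)) : List (List Bool) :=
  List.replicate (n + 1) false :: List.replicate (n + 1) false :: T.toList.map List.ofFn

theorem joinBlocks_setBlocks_append_mem_Bn_iff (n : ℕ) (T : Finset (Fin n → Bool))
    (f : Fin n → Bool) :
    joinBlocks (setBlocks n T) ++ none :: (List.ofFn f).map some ∈ Bn n ↔ f ∈ T := by
  have hne : setBlocks n T ≠ [] := by simp [setBlocks]
  have hpad : List.ofFn f ≠ List.replicate (n + 1) false := fun h => by
    simpa using congrArg List.length h
  rw [← joinBlocks_append_singleton hne, joinBlocks_append_singleton_mem_Bn_iff]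
  simp [setBlocks, hpad, List.ofFn_inj]

theorem leftQuotient_joinBlocks_setBlocks_injective (n : ℕ) :
    Injective fun T => Language.leftQuotient (Bn n) (joinBlocks (setBlocks n T)) := by
  intro T₁ T₂ h
  ext f
  rw [← joinBlocks_setBlocks_append_mem_Bn_iff, ← joinBlocks_setBlocks_append_mem_Bn_iff]
  exact Set.ext_iff.1 h (none :: (List.ofFn f).map some)

/-- Every DFA accepting `Bₙ` has at least `2^(2^n)` states. -/
theorem stmt9 (n : ℕ) (S : Type*) [Fintype S] (dfa : DFA (Option Bool) S)
    (hacc : ∀ w : List (Option Bool), w ∈ dfa.accepts ↔ w ∈ Bn n) :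
    2 ^ (2 ^ n) ≤ Fintype.card S := by
  have hL : dfa.accepts = Bn n := Set.ext hacc
  calc 2 ^ (2 ^ n) = Fintype.card (Finset (Fin n → Bool)) := by simp [Fintype.card_finset]
    _ ≤ Fintype.card S := dfa.card_le_of_injective_leftQuotient _ <| by
        rw [hL]; exact leftQuotient_joinBlocks_setBlocks_injective n
end

section
/- Let M be a weight-reducing deterministic one-tape Turing machine. If a computation of M visits two distinct initially-blank tape cells, both located on the same side of the initial segment, in exactly the same (time-ordered) sequence of states, then that computation is infinite. -/
/-!
Let `a` be the cell nearer to the input, `b` the other one and `d = b - a`; the half-line beyond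
`a` contains `b` and starts blank. Every time `t` at which the head is beyond `a` has a shadow
time `u` at which the configuration beyond `b` is the configuration beyond `a` at time `t`,
translated by `d`. The shadow of the next step is the next step, since the machine reads the same
symbol in the same state. When the head leaves the half-line beyond `a`, it does so from `a` and
comes back at the next visit of `a`; the matched visit of `b` happens in the same state, and
meanwhile neither half-line is touched. So the head, once at `a`, reaches `a + d`, then `a + 2d`,
and so on; since it moves one cell per step, the computation never halts.
-/

theorem Set.BijOn.strictMonoOn_invFunOn {α β : Type*} [LinearOrder α] [LinearOrder β] [Nonempty α]
    {S : Set α} {T : Set β} {g : α → β} (hbij : Set.BijOn g S T) (hmono : StrictMonoOn g S) :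
    StrictMonoOn (Function.invFunOn g S) T := by
  intro m hm m' hm' hlt
  have hinv := hbij.invOn_invFunOn
  have hbij' := hbij.symm hinv.symm
  rwa [← hmono.lt_iff_lt (hbij'.mapsTo hm) (hbij'.mapsTo hm'), hinv.2 hm, hinv.2 hm']

theorem StrictMonoOn.le_succ_iff_apply_le_succ {S T : Set ℕ} {g : ℕ → ℕ} (hmono : StrictMonoOn g S)
    (hbij : Set.BijOn g S T) {t u : ℕ} (hcut : ∀ v ∈ S, v ≤ t ↔ g v ≤ u)
    (hnext : t + 1 ∈ S ↔ u + 1 ∈ T) : ∀ v ∈ S, v ≤ t + 1 ↔ g v ≤ u + 1 := by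
  intro v hv
  by_cases hvt : v ≤ t
  · have := (hcut v hv).1 hvt
    omega
  have hgv : u < g v := lt_of_not_ge (mt (hcut v hv).2 hvt)
  constructor
  · intro hv₁
    obtain rfl : v = t + 1 := by omega
    obtain ⟨v', hv', hgv'⟩ := hbij.surjOn (hnext.1 hv)
    have hv'v : t + 1 ≤ v' := by
      by_contra h
      have := (hcut v' hv').1 (by omega)
      omega
    have := hmono.monotoneOn hv hv' hv'v
    omega
  · intro hgv₁
    have ht₁ : t + 1 ∈ S := hnext.2 (by rw [← show g v = u + 1 by omega]; exact hbij.mapsTo hv)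
    have hgt₁ : u < g (t + 1) := lt_of_not_ge (mt (hcut (t + 1) ht₁).2 (by omega))
    by_contra h
    have := hmono ht₁ hv (by omega)
    omega

structure TMCfg.ShiftedOn {Q Γ : Type*} (H : Set ℤ) (d : ℤ) (c c' : TMCfg Q Γ) : Prop where
  state_eq : c'.state = c.state
  head_eq : c'.head = c.head + d
  tape_eq : ∀ x ∈ H, c'.tape (x + d) = c.tape x

namespace DTM

variable {A Q Γ : Type*} {M : DTM A Q Γ} {w : List A}

theorem initTape_of_neg {x : ℤ} (hx : x < 0) : M.initTape w x = M.blank :=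
  if_neg (not_le.2 hx)

theorem initTape_of_length_le {x : ℤ} (hx : (w.length : ℤ) ≤ x) : M.initTape w x = M.blank := by
  rw [initTape, if_pos (by omega)]
  exact List.getD_eq_default _ _ (by rw [List.length_map]; omega)

theorem stepCfg_eq_some {c c' : TMCfg Q Γ} (h : M.stepCfg c = some c') :
    ∃ q τ d, M.δ c.state (c.tape c.head) = some (q, τ, d) ∧
      c' = ⟨q, Function.update c.tape c.head τ, if d then c.head + 1 else c.head - 1⟩ := by
  obtain ⟨⟨q, τ, d⟩, hδ, rfl⟩ := Option.map_eq_some_iff.mp h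
  exact ⟨q, τ, d, hδ, rfl⟩

theorem head_stepCfg {c c' : TMCfg Q Γ} (h : M.stepCfg c = some c') :
    c'.head = c.head + 1 ∨ c'.head = c.head - 1 := by
  obtain ⟨q, τ, d, -, rfl⟩ := stepCfg_eq_some h
  cases d <;> simp

theorem tape_stepCfg_of_ne {c c' : TMCfg Q Γ} (h : M.stepCfg c = some c') {x : ℤ}
    (hx : x ≠ c.head) : c'.tape x = c.tape x := by
  obtain ⟨q, τ, d, -, rfl⟩ := stepCfg_eq_some h
  exact Function.update_of_ne hx _ _

theorem exists_run_of_run_succ {n : ℕ} {c' : TMCfg Q Γ} (h : M.run w (n + 1) = some c') :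
    ∃ c, M.run w n = some c ∧ M.stepCfg c = some c' :=
  Option.bind_eq_some_iff.mp h

theorem run_succ_of_stepCfg {n : ℕ} {c c' : TMCfg Q Γ} (h : M.run w n = some c)
    (hstep : M.stepCfg c = some c') : M.run w (n + 1) = some c' :=
  Option.bind_eq_some_iff.mpr ⟨c, h, hstep⟩

theorem isSome_run_of_le {m n : ℕ} (hmn : m ≤ n) (h : (M.run w n).isSome) :
    (M.run w m).isSome := by
  induction n, hmn using Nat.le_induction with
  | base => exact h
  | succ n _ ih => exact ih (Option.isSome_of_isSome_bind h)

theorem exists_run_of_le {m n : ℕ} {c : TMCfg Q Γ} (hmn : m ≤ n) (h : M.run w n = some c) :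
    ∃ c', M.run w m = some c' :=
  Option.isSome_iff_exists.mp (isSome_run_of_le hmn (by rw [h]; rfl))

theorem abs_head_le {n : ℕ} {c : TMCfg Q Γ} (h : M.run w n = some c) : |c.head| ≤ n := by
  induction n generalizing c with
  | zero =>
    obtain rfl : M.initCfg w = c := Option.some.inj h
    simp [initCfg]
  | succ n ih =>
    obtain ⟨c₀, h₀, hstep⟩ := exists_run_of_run_succ h
    have := ih h₀
    rw [abs_le] at this ⊢
    rcases head_stepCfg hstep with h | h <;> push_cast <;> omega

theorem mem_visits_iff {n : ℕ} {c : TMCfg Q Γ} (h : M.run w n = some c) {y : ℤ} :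
    n ∈ M.visits w y ↔ c.head = y := by
  simp [visits, h]

theorem tape_run_eq_of_forall_head_ne {t t' : ℕ} {c c' : TMCfg Q Γ} {x : ℤ} (htt' : t ≤ t')
    (hc : M.run w t = some c) (hc' : M.run w t' = some c')
    (hx : ∀ v, t ≤ v → v < t' → ∀ cv, M.run w v = some cv → cv.head ≠ x) :
    c'.tape x = c.tape x := by
  induction t', htt' using Nat.le_induction generalizing c' with
  | base => rw [Option.some.inj (hc.symm.trans hc')]
  | succ n hn ih =>
    obtain ⟨cv, hcv, hstep⟩ := exists_run_of_run_succ hc'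
    rw [tape_stepCfg_of_ne hstep (hx n hn n.lt_succ_self cv hcv).symm]
    exact ih hcv fun v h₁ h₂ => hx v h₁ (h₂.trans n.lt_succ_self)

theorem exists_stepCfg_shiftedOn {H : Set ℤ} {d : ℤ} {c c' c₁ : TMCfg Q Γ} (h : c.ShiftedOn H d c')
    (hH : c.head ∈ H) (hstep : M.stepCfg c = some c₁) :
    ∃ c₁', M.stepCfg c' = some c₁' ∧ c₁.ShiftedOn H d c₁' := by
  obtain ⟨q, τ, dir, hδ, rfl⟩ := stepCfg_eq_some hstep
  have hδ' : M.δ c'.state (c'.tape c'.head) = some (q, τ, dir) := by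
    rw [h.state_eq, h.head_eq, h.tape_eq _ hH, hδ]
  refine ⟨⟨q, Function.update c'.tape c'.head τ, if dir then c'.head + 1 else c'.head - 1⟩,
    by simp only [stepCfg, hδ', Option.map_some], ⟨rfl, ?_, fun x hx => ?_⟩⟩
  · cases dir <;> simp only [h.head_eq, Bool.false_eq_true, if_true, if_false] <;> ring
  · by_cases hx' : x = c.head
    · simp [hx', h.head_eq]
    · simp [h.head_eq, hx', h.tape_eq x hx]

section HalfLine

variable {s : ℤ}

theorem head_eq_of_stepCfg_of_lt_of_le (hs : s = 1 ∨ s = -1) {c c' : TMCfg Q Γ} {y : ℤ}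
    (h : M.stepCfg c = some c') (hlt : s * c.head < s * y) (hle : s * y ≤ s * c'.head) :
    c'.head = y := by
  rcases head_stepCfg h with h | h <;> rcases hs with rfl | rfl <;> omega

theorem head_eq_of_stepCfg_of_le_of_lt (hs : s = 1 ∨ s = -1) {c c' : TMCfg Q Γ} {y : ℤ}
    (h : M.stepCfg c = some c') (hle : s * y ≤ s * c.head) (hlt : s * c'.head < s * y) :
    c.head = y := by
  rcases head_stepCfg h with h | h <;> rcases hs with rfl | rfl <;> omega

theorem mul_head_lt_of_forall_notMem_visits (hs : s = 1 ∨ s = -1) {t t' : ℕ} {c c' : TMCfg Q Γ}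
    {y : ℤ} (htt' : t ≤ t') (hc : M.run w t = some c) (hlt : s * c.head < s * y)
    (hnot : ∀ v, t < v → v ≤ t' → v ∉ M.visits w y) (hc' : M.run w t' = some c') :
    s * c'.head < s * y := by
  induction t', htt' using Nat.le_induction generalizing c' with
  | base => rwa [← Option.some.inj (hc.symm.trans hc')]
  | succ n hn ih =>
    obtain ⟨cv, hcv, hstep⟩ := exists_run_of_run_succ hc'
    have hv := ih (fun v h₁ h₂ => hnot v h₁ (h₂.trans n.le_succ)) hcv
    by_contra hle
    exact hnot (n + 1) (by omega) le_rfl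
      ((mem_visits_iff hc').2 (head_eq_of_stepCfg_of_lt_of_le hs hstep hv (not_lt.1 hle)))

end HalfLine

structure VisitReplay (M : DTM A Q Γ) (w : List A) (a b : ℤ) (g : ℕ → ℕ) : Prop where
  strictMonoOn : StrictMonoOn g (M.visits w a)
  bijOn : Set.BijOn g (M.visits w a) (M.visits w b)
  state_eq : ∀ n ∈ M.visits w a,
    (M.run w (g n)).map TMCfg.state = (M.run w n).map TMCfg.state

namespace VisitReplay

variable {s a b : ℤ} {g : ℕ → ℕ}

theorem symm (hr : M.VisitReplay w a b g) : ∃ g', M.VisitReplay w b a g' := by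
  have hinv := hr.bijOn.invOn_invFunOn
  have hbij := hr.bijOn.symm hinv.symm
  refine ⟨_, hr.bijOn.strictMonoOn_invFunOn hr.strictMonoOn, hbij, fun m hm => ?_⟩
  have := hr.state_eq _ (hbij.mapsTo hm)
  rwa [hinv.2 hm, eq_comm] at this

theorem state_eq_of_run (hr : M.VisitReplay w a b g) {n : ℕ} (hn : n ∈ M.visits w a)
    {c c' : TMCfg Q Γ} (hc : M.run w n = some c) (hc' : M.run w (g n) = some c') :
    c'.state = c.state := by
  simpa [hc, hc'] using hr.state_eq n hn

/-- Covers both the first arrival at `a` (with `p = q = 0`) and the return to `a` after an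
excursion. -/
theorem shiftedOn_of_return (hr : M.VisitReplay w a b g) (hs : s = 1 ∨ s = -1)
    {p q t : ℕ} {cp cq ct cu : TMCfg Q Γ} (hcp : M.run w p = some cp) (hcq : M.run w q = some cq)
    (hpt : p ≤ t) (hqt : q ≤ g t)
    (htape : ∀ x, s * a ≤ s * x → cq.tape (x + (b - a)) = cp.tape x) (hq : s * cq.head < s * b)
    (hout : ∀ v, p ≤ v → v < t → ∀ cv, M.run w v = some cv → s * cv.head < s * a)
    (hbefore : ∀ v ∈ M.visits w a, v < p → g v < q)
    (ht : t ∈ M.visits w a) (hct : M.run w t = some ct) (hcu : M.run w (g t) = some cu) :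
    ct.ShiftedOn {x | s * a ≤ s * x} (b - a) cu := by
  have hta : ct.head = a := (mem_visits_iff hct).1 ht
  have hub : cu.head = b := (mem_visits_iff hcu).1 (hr.bijOn.mapsTo ht)
  have hout' : ∀ v, q ≤ v → v < g t → ∀ cv, M.run w v = some cv → s * cv.head < s * b := by
    refine fun v hqv hvt cv hcv => mul_head_lt_of_forall_notMem_visits hs hqv hcq hq ?_ hcv
    intro m hqm hmv hm
    obtain ⟨n, hn, rfl⟩ := hr.bijOn.surjOn hm
    have hnt : n < t := (hr.strictMonoOn.lt_iff_lt hn ht).1 (by omega)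
    by_cases hnp : n < p
    · have := hbefore n hn hnp
      omega
    · obtain ⟨cn, hcn⟩ := exists_run_of_le hnt.le hct
      have := hout n (by omega) hnt cn hcn
      rw [(mem_visits_iff hcn).1 hn] at this
      exact this.false
  refine ⟨hr.state_eq_of_run ht hct hcu, by omega, fun x hx => ?_⟩
  have hx' : s * b ≤ s * (x + (b - a)) := by
    rw [mul_add, mul_sub]
    linarith [show s * a ≤ s * x from hx]
  rw [tape_run_eq_of_forall_head_ne hqt hcq hcu, htape x hx,
    tape_run_eq_of_forall_head_ne hpt hcp hct]
  · exact fun v h₁ h₂ cv hcv heq => (hout v h₁ h₂ cv hcv).not_ge (heq ▸ hx)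
  · exact fun v h₁ h₂ cv hcv heq => (hout' v h₁ h₂ cv hcv).not_ge (heq ▸ hx')

theorem exists_shiftedOn_of_first (hr : M.VisitReplay w a b g) (hs : s = 1 ∨ s = -1)
    (hab : s * a < s * b) (h0 : 0 ≤ s * a)
    (hblank : ∀ x, s * a ≤ s * x → M.initTape w x = M.blank)
    {t : ℕ} {ct : TMCfg Q Γ} (hct : M.run w t = some ct) (htR : s * a ≤ s * ct.head)
    (hout : ∀ v < t, ∀ cv, M.run w v = some cv → s * cv.head < s * a) :
    ∃ u cu, M.run w u = some cu ∧ ct.ShiftedOn {x | s * a ≤ s * x} (b - a) cu ∧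
      ∀ v ∈ M.visits w a, v ≤ t ↔ g v ≤ u := by
  have hta : ct.head = a := by
    cases t with
    | zero =>
      obtain rfl : M.initCfg w = ct := Option.some.inj hct
      simp only [initCfg] at htR ⊢
      rcases hs with rfl | rfl <;> omega
    | succ t =>
      obtain ⟨cv, hcv, hstep⟩ := exists_run_of_run_succ hct
      exact head_eq_of_stepCfg_of_lt_of_le hs hstep (hout t t.lt_succ_self cv hcv) htR
  have ht : t ∈ M.visits w a := (mem_visits_iff hct).2 hta
  obtain ⟨cu, hcu, -⟩ := hr.bijOn.mapsTo ht
  have hblank' : ∀ x, s * a ≤ s * x → M.initTape w (x + (b - a)) = M.initTape w x := by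
    intro x hx
    rw [hblank x hx, hblank]
    rw [mul_add, mul_sub]
    linarith
  refine ⟨g t, cu, hcu, hr.shiftedOn_of_return hs rfl rfl t.zero_le (g t).zero_le hblank' ?_
    (fun v _ h => hout v h) (fun v _ h => absurd h v.not_lt_zero) ht hct hcu,
    fun v hv => (hr.strictMonoOn.le_iff_le hv ht).symm⟩
  simp only [initCfg]
  omega

theorem exists_shiftedOn_of_next (hr : M.VisitReplay w a b g) (hs : s = 1 ∨ s = -1)
    {p u t : ℕ} {cp cu ct : TMCfg Q Γ} (hcp : M.run w p = some cp) (hcu : M.run w u = some cu)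
    (hpR : s * a ≤ s * cp.head) (hsh : cp.ShiftedOn {x | s * a ≤ s * x} (b - a) cu)
    (hcut : ∀ v ∈ M.visits w a, v ≤ p ↔ g v ≤ u)
    (hpt : p < t) (hct : M.run w t = some ct) (htR : s * a ≤ s * ct.head)
    (hout : ∀ v, p < v → v < t → ∀ cv, M.run w v = some cv → s * cv.head < s * a) :
    ∃ u' cu', M.run w u' = some cu' ∧ ct.ShiftedOn {x | s * a ≤ s * x} (b - a) cu' ∧
      ∀ v ∈ M.visits w a, v ≤ t ↔ g v ≤ u' := by
  obtain ⟨c₁, hc₁⟩ := exists_run_of_le hpt hct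
  obtain ⟨cp', hcp', hstep⟩ := exists_run_of_run_succ hc₁
  obtain rfl : cp = cp' := Option.some.inj (hcp.symm.trans hcp')
  obtain ⟨cu₁, hstep', hsh₁⟩ := exists_stepCfg_shiftedOn hsh hpR hstep
  have hcu₁ := run_succ_of_stepCfg hcu hstep'
  rcases (Nat.succ_le_of_lt hpt).eq_or_lt with rfl | hpt'
  · obtain rfl : c₁ = ct := Option.some.inj (hc₁.symm.trans hct)
    refine ⟨u + 1, cu₁, hcu₁, hsh₁, hr.strictMonoOn.le_succ_iff_apply_le_succ hr.bijOn hcut ?_⟩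
    rw [mem_visits_iff hc₁, mem_visits_iff hcu₁, hsh₁.head_eq]
    omega
  -- the head leaves the half-line beyond `a` at time `p` and comes back at time `t`
  have hout₁ := hout (p + 1) p.lt_succ_self hpt' c₁ hc₁
  obtain ⟨t, rfl⟩ : ∃ t', t = t' + 1 := ⟨t - 1, by omega⟩
  obtain ⟨cv, hcv, hstep_t⟩ := exists_run_of_run_succ hct
  have ht : t + 1 ∈ M.visits w a := (mem_visits_iff hct).2
    (head_eq_of_stepCfg_of_lt_of_le hs hstep_t (hout t (by omega) t.lt_succ_self cv hcv) htR)
  obtain ⟨cu', hcu', -⟩ := hr.bijOn.mapsTo ht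
  have hut : u < g (t + 1) := lt_of_not_ge (mt ((hcut _ ht).2) (by omega))
  have hq : s * cu₁.head < s * b := by
    rw [hsh₁.head_eq, mul_add, mul_sub]
    linarith
  refine ⟨g (t + 1), cu', hcu', hr.shiftedOn_of_return hs hc₁ hcu₁ hpt'.le hut hsh₁.tape_eq hq
    (fun v h₁ h₂ => hout v h₁ h₂) (fun v hv h => ?_) ht hct hcu',
    fun v hv => (hr.strictMonoOn.le_iff_le hv ht).symm⟩
  have := (hcut v hv).1 (by omega)
  omega

theorem exists_shiftedOn (hr : M.VisitReplay w a b g) (hs : s = 1 ∨ s = -1)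
    (hab : s * a < s * b) (h0 : 0 ≤ s * a)
    (hblank : ∀ x, s * a ≤ s * x → M.initTape w x = M.blank) (t : ℕ) :
    ∀ ct, M.run w t = some ct → s * a ≤ s * ct.head →
      ∃ u cu, M.run w u = some cu ∧ ct.ShiftedOn {x | s * a ≤ s * x} (b - a) cu ∧
        ∀ v ∈ M.visits w a, v ≤ t ↔ g v ≤ u := by
  induction t using Nat.strong_induction_on with
  | _ t ih =>
    intro ct hct htR
    by_cases hprev : {v | v < t ∧ ∃ cv, M.run w v = some cv ∧ s * a ≤ s * cv.head}.Nonempty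
    · obtain ⟨p, ⟨hpt, cp, hcp, hpR⟩, hlast⟩ :=
        Set.exists_max_image _ id ((Set.finite_Iio t).subset fun v hv => hv.1) hprev
      obtain ⟨u, cu, hcu, hsh, hcut⟩ := ih p hpt cp hcp hpR
      exact hr.exists_shiftedOn_of_next hs hcp hcu hpR hsh hcut hpt hct htR
        fun v hpv hvt cv hcv => lt_of_not_ge fun hv => (hlast v ⟨hvt, cv, hcv, hv⟩).not_gt hpv
    · exact hr.exists_shiftedOn_of_first hs hab h0 hblank hct htR
        fun v hvt cv hcv => lt_of_not_ge fun hv => hprev ⟨v, hvt, cv, hcv, hv⟩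

theorem infiniteOn (hr : M.VisitReplay w a b g) (hs : s = 1 ∨ s = -1)
    (hab : s * a < s * b) (h0 : 0 ≤ s * a)
    (hblank : ∀ x, s * a ≤ s * x → M.initTape w x = M.blank)
    (hvisited : (M.visits w a).Nonempty) : M.InfiniteOn w := by
  have hfar : ∀ k : ℕ, ∃ t ct, M.run w t = some ct ∧ s * a ≤ s * ct.head ∧ k ≤ s * ct.head := by
    intro k
    induction k with
    | zero =>
      obtain ⟨t, ct, hct, rfl⟩ := hvisited
      exact ⟨t, ct, hct, le_rfl, by simpa using h0⟩
    | succ k ih =>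
      obtain ⟨t, ct, hct, hR, hk⟩ := ih
      obtain ⟨u, cu, hcu, hsh, -⟩ := hr.exists_shiftedOn hs hab h0 hblank t ct hct hR
      have : s * cu.head = s * ct.head + (s * b - s * a) := by rw [hsh.head_eq]; ring
      exact ⟨u, cu, hcu, by omega, by push_cast; omega⟩
  intro n
  obtain ⟨t, ct, hct, -, hn⟩ := hfar n
  have := abs_le.1 (abs_head_le hct)
  refine isSome_run_of_le ?_ (by rw [hct]; rfl)
  rcases hs with rfl | rfl <;> omega

end VisitReplay

end DTM

theorem stmt14_general {A Q Γ : Type*} (M : DTM A Q Γ)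
    (w : List A) (c₁ c₂ : ℤ) (hne : c₁ ≠ c₂)
    (hside : (c₁ < 0 ∧ c₂ < 0) ∨ ((w.length : ℤ) ≤ c₁ ∧ (w.length : ℤ) ≤ c₂))
    (hvisited : (M.visits w c₁).Nonempty)
    (g : ℕ → ℕ)
    (hmono : StrictMonoOn g (M.visits w c₁))
    (hbij : Set.BijOn g (M.visits w c₁) (M.visits w c₂))
    (hstates : ∀ n ∈ M.visits w c₁,
      (M.run w (g n)).map TMCfg.state = (M.run w n).map TMCfg.state) :
    M.InfiniteOn w := by
  have hr : M.VisitReplay w c₁ c₂ g := ⟨hmono, hbij, hstates⟩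
  -- `s` orients the tape so that the blank half-line beyond each cell is `{x | s * c ≤ s * x}`
  obtain ⟨s, hs, h₁, h₂, hblank⟩ : ∃ s : ℤ, (s = 1 ∨ s = -1) ∧ 0 ≤ s * c₁ ∧ 0 ≤ s * c₂ ∧
      ∀ x, s * c₁ ≤ s * x ∨ s * c₂ ≤ s * x → M.initTape w x = M.blank := by
    rcases hside with ⟨h₁, h₂⟩ | ⟨h₁, h₂⟩
    · exact ⟨-1, Or.inr rfl, by omega, by omega, fun x hx => DTM.initTape_of_neg (by omega)⟩
    · exact ⟨1, Or.inl rfl, by omega, by omega, fun x hx => DTM.initTape_of_length_le (by omega)⟩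
  rcases lt_or_gt_of_ne (show s * c₁ ≠ s * c₂ by rcases hs with rfl | rfl <;> omega) with h | h
  · exact hr.infiniteOn hs h h₁ (fun x hx => hblank x (Or.inl hx)) hvisited
  · obtain ⟨g', hr'⟩ := hr.symm
    exact hr'.infiniteOn hs h h₂ (fun x hx => hblank x (Or.inr hx))
      (hbij.image_eq ▸ hvisited.image g)

/-- If a computation of a weight-reducing DTM visits two distinct
initially-blank cells on the same side of the initial segment in the same
time-ordered sequence of states (witnessed by an order-preserving bijection
`g` between the visit times that matches the states), then the computation is
infinite. -/
theorem stmt14 {A Q Γ : Type*} (M : DTM A Q Γ) (hwr : M.WeightReducing)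
    (w : List A) (c₁ c₂ : ℤ) (hne : c₁ ≠ c₂)
    (hside : (c₁ < 0 ∧ c₂ < 0) ∨ ((w.length : ℤ) ≤ c₁ ∧ (w.length : ℤ) ≤ c₂))
    (hvisited : (M.visits w c₁).Nonempty)
    (g : ℕ → ℕ)
    (hmono : StrictMonoOn g (M.visits w c₁))
    (hbij : Set.BijOn g (M.visits w c₁) (M.visits w c₂))
    (hstates : ∀ n ∈ M.visits w c₁,
      (M.run w (g n)).map TMCfg.state = (M.run w n).map TMCfg.state) :
    M.InfiniteOn w :=
  stmt14_general M w c₁ c₂ hne hside hvisited g hmono hbij hstates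
end

section
/- Let M be a weight-reducing deterministic one-tape Turing machine with n states and g working symbols. A computation of M is infinite if and only if it visits at least (n+1)^g consecutive initially-blank cells on one side of the initial segment. -/
/-!
Weight reduction lets the head visit each cell at most `|Γ|` times, so a computation that never
halts cannot stay in a bounded region and must sweep every cell on one side of the input.

Conversely, let a halting computation visit `N = (|Q| + 1) ^ |Γ|` consecutive blank cells right of
the input. The sequence of states in which the head visits such a cell is nonempty and has length
at most `|Γ|`, so two of these cells `b < b'` share it. As everything from `b` and from `b'` on is
initially blank, induction over the visits shows that at the `k`-th visit to `b'` the tape from `b'`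
on is the tape from `b` on at the `k`-th visit to `b`, shifted by `b' - b`; in particular every cell
`b + x` that is visited yields a visited cell `b' + x`. Iterating drives the head arbitrarily far to
the right, which a halting computation cannot do. The left side is the mirror image.
-/

def SkipFree (f : ℕ → ℤ) : Prop := ∀ n, |f (n + 1) - f n| ≤ 1

namespace SkipFree

variable {f : ℕ → ℤ}

theorem neg (hf : SkipFree f) : SkipFree (fun n => -f n) := fun n => by
  rw [← abs_neg]; convert hf n using 2; ring

theorem lt_of_forall_ne (hf : SkipFree f) {b : ℤ} {m n : ℕ} (hm : f m < b) (hmn : m ≤ n)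
    (hne : ∀ s, m < s → s ≤ n → f s ≠ b) : f n < b := by
  induction n, hmn using Nat.le_induction with
  | base => exact hm
  | succ n hmn ih =>
    have hprev := ih fun s h₁ h₂ => hne s h₁ (by omega)
    have hstep := abs_le.mp (hf n)
    have := hne (n + 1) (by omega) le_rfl
    omega

theorem gt_of_forall_ne (hf : SkipFree f) {b : ℤ} {m n : ℕ} (hm : b < f m) (hmn : m ≤ n)
    (hne : ∀ s, m < s → s ≤ n → f s ≠ b) : b < f n :=
  neg_lt_neg_iff.mp <| hf.neg.lt_of_forall_ne (neg_lt_neg hm) hmn fun s h₁ h₂ h =>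
    hne s h₁ h₂ (neg_inj.mp h)

theorem exists_eq_forall_le (hf : SkipFree f) {b : ℤ} (h₀ : f 0 ≤ b) {n : ℕ} (hn : b ≤ f n) :
    ∃ u ≤ n, f u = b ∧ ∀ s, u ≤ s → s ≤ n → b ≤ f s := by
  induction n with
  | zero => exact ⟨0, le_rfl, le_antisymm h₀ hn, fun s _ hs => by rwa [Nat.le_zero.mp hs]⟩
  | succ n ih =>
    by_cases hb : b ≤ f n
    · obtain ⟨u, hu, hfu, hle⟩ := ih hb
      refine ⟨u, by omega, hfu, fun s h₁ h₂ => ?_⟩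
      rcases Nat.lt_or_ge s (n + 1) with h | h
      · exact hle s h₁ (by omega)
      · rwa [le_antisymm h₂ h]
    · have := abs_le.mp (hf n)
      exact ⟨n + 1, le_rfl, by omega, fun s h₁ h₂ => by rwa [le_antisymm h₂ h₁]⟩

theorem le_add (hf : SkipFree f) (n : ℕ) : f n ≤ f 0 + n := by
  induction n with
  | zero => simp
  | succ n ih => have := abs_le.mp (hf n); push_cast; omega

end SkipFree

namespace List.SortedLT

variable {α : Type*} [LinearOrder α] {l : List α}

theorem getElem_zero_le_of_mem (hl : l.SortedLT) (h₀ : 0 < l.length) {z : α} (hz : z ∈ l) :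
    l[0] ≤ z := by
  obtain ⟨j, hj, rfl⟩ := List.getElem_of_mem hz
  exact hl.getElem_le_getElem_iff.mpr (Nat.zero_le j)

theorem getElem_succ_le_of_mem (hl : l.SortedLT) {k : ℕ} (hk : k + 1 < l.length) {z : α}
    (hz : z ∈ l) (h : l[k] < z) : l[k + 1] ≤ z := by
  obtain ⟨j, hj, rfl⟩ := List.getElem_of_mem hz
  rw [hl.getElem_lt_getElem_iff] at h
  exact hl.getElem_le_getElem_iff.mpr h

end List.SortedLT

/-- Encode a list of length at most `g` by its `g` optional entries; for a nonempty list these are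
not all `none`. -/
theorem List.exists_lt_eq_of_forall_length_le {α : Type*} [Fintype α] {g : ℕ} (F : ℕ → List α)
    (hF : ∀ j < (Fintype.card α + 1) ^ g, F j ≠ [] ∧ (F j).length ≤ g) :
    ∃ a a', a < a' ∧ a' < (Fintype.card α + 1) ^ g ∧ F a = F a' := by
  classical
  let code : List α → Fin g → Option α := fun l k => l[k.1]?
  have hmaps : ∀ j ∈ Finset.range ((Fintype.card α + 1) ^ g),
      code (F j) ∈ Finset.univ.erase fun _ => none := by
    intro j hj
    obtain ⟨hne, hlen⟩ := hF j (Finset.mem_range.mp hj)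
    have hpos := List.length_pos_iff.mpr hne
    refine Finset.mem_erase.mpr ⟨fun h => ?_, Finset.mem_univ _⟩
    have h₀ : (F j)[0]? = none := congrFun h ⟨0, by omega⟩
    exact hne (List.getElem?_eq_none_iff.mp h₀ |> Nat.le_zero.mp |> List.length_eq_zero_iff.mp)
  obtain ⟨x, hx, y, hy, hxy, hcode⟩ := Finset.exists_ne_map_eq_of_card_lt_of_maps_to
    (by simp [Finset.card_erase_of_mem, Fintype.card_option])
    fun j hj => hmaps j hj
  rw [Finset.mem_range] at hx hy
  have hFxy : F x = F y := List.ext_getElem? fun i => by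
    by_cases hi : i < g
    · exact congrFun hcode ⟨i, hi⟩
    · rw [List.getElem?_eq_none (by have := (hF x hx).2; omega),
        List.getElem?_eq_none (by have := (hF y hy).2; omega)]
  rcases Nat.lt_or_gt_of_ne hxy with h | h
  exacts [⟨x, y, h, hy, hFxy⟩, ⟨y, x, h, hx, hFxy.symm⟩]

namespace DTM

variable {A Q Γ : Type*}

def stepOrStay (M : DTM A Q Γ) (c : TMCfg Q Γ) : TMCfg Q Γ := (M.stepCfg c).getD c

def traj (M : DTM A Q Γ) (c : TMCfg Q Γ) : ℕ → TMCfg Q Γ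
  | 0 => c
  | n + 1 => M.stepOrStay (M.traj c n)

variable {M : DTM A Q Γ}

theorem stepOrStay_of_δ_eq_some {c : TMCfg Q Γ} {q : Q} {τ : Γ} {dir : Bool}
    (h : M.δ c.state (c.tape c.head) = some (q, τ, dir)) :
    M.stepOrStay c =
      ⟨q, Function.update c.tape c.head τ, if dir then c.head + 1 else c.head - 1⟩ := by
  simp [stepOrStay, stepCfg, h]

theorem stepOrStay_of_δ_eq_none {c : TMCfg Q Γ} (h : M.δ c.state (c.tape c.head) = none) :
    M.stepOrStay c = c := by
  simp [stepOrStay, stepCfg, h]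

theorem stepCfg_eq_none_iff {c : TMCfg Q Γ} :
    M.stepCfg c = none ↔ M.δ c.state (c.tape c.head) = none := by
  simp [stepCfg]

theorem stepCfg_eq_some_stepOrStay {c : TMCfg Q Γ} (h : M.stepCfg c ≠ none) :
    M.stepCfg c = some (M.stepOrStay c) := by
  obtain ⟨c', hc'⟩ := Option.ne_none_iff_exists'.mp h
  simp [stepOrStay, hc']

theorem traj_add (c : TMCfg Q Γ) (m n : ℕ) : M.traj c (m + n) = M.traj (M.traj c m) n := by
  induction n with
  | zero => rfl
  | succ n ih => exact congrArg M.stepOrStay ih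

theorem traj_eq_of_halted {c : TMCfg Q Γ} {T t : ℕ} (hT : M.stepCfg (M.traj c T) = none)
    (ht : T ≤ t) : M.traj c t = M.traj c T := by
  induction t, ht using Nat.le_induction with
  | base => rfl
  | succ t _ ih =>
    rw [traj, ih]
    exact stepOrStay_of_δ_eq_none (stepCfg_eq_none_iff.mp hT)

theorem skipFree_head (c : TMCfg Q Γ) : SkipFree fun t => (M.traj c t).head := fun t => by
  change |(M.stepOrStay (M.traj c t)).head - _| ≤ 1
  cases h : M.δ (M.traj c t).state ((M.traj c t).tape (M.traj c t).head) with
  | none => simp [stepOrStay_of_δ_eq_none h]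
  | some x =>
    obtain ⟨q, τ, dir⟩ := x
    rw [stepOrStay_of_δ_eq_some h]
    cases dir <;> simp

theorem tape_stepOrStay_of_ne {c : TMCfg Q Γ} {p : ℤ} (hp : p ≠ c.head) :
    (M.stepOrStay c).tape p = c.tape p := by
  cases h : M.δ c.state (c.tape c.head) with
  | none => rw [stepOrStay_of_δ_eq_none h]
  | some x =>
    obtain ⟨q, τ, dir⟩ := x
    simp [stepOrStay_of_δ_eq_some h, Function.update_of_ne hp]

theorem tape_traj_eq_of_forall_head_ne {c : TMCfg Q Γ} {p : ℤ} {t₁ t₂ : ℕ} (h₁₂ : t₁ ≤ t₂)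
    (hne : ∀ s, t₁ ≤ s → s < t₂ → (M.traj c s).head ≠ p) :
    (M.traj c t₂).tape p = (M.traj c t₁).tape p := by
  induction t₂, h₁₂ using Nat.le_induction with
  | base => rfl
  | succ t₂ h ih =>
    rw [traj, tape_stepOrStay_of_ne (hne t₂ h (by omega)).symm]
    exact ih fun s hs₁ hs₂ => hne s hs₁ (by omega)

theorem run_eq_some_traj {w : List A} {n : ℕ}
    (h : ∀ t < n, M.stepCfg (M.traj (M.initCfg w) t) ≠ none) :
    M.run w n = some (M.traj (M.initCfg w) n) := by
  induction n with
  | zero => rfl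
  | succ n ih =>
    rw [run, ih fun t ht => h t (by omega), Option.bind_some]
    exact stepCfg_eq_some_stepOrStay (h n (by omega))

theorem eq_traj_of_run_eq_some {w : List A} {n : ℕ} {c : TMCfg Q Γ} (h : M.run w n = some c) :
    c = M.traj (M.initCfg w) n := by
  induction n generalizing c with
  | zero => exact (Option.some_inj.mp h).symm
  | succ n ih =>
    obtain ⟨c', hc', hstep⟩ := Option.bind_eq_some_iff.mp h
    rw [traj, ← ih hc', stepOrStay, hstep, Option.getD_some]

theorem infiniteOn_iff {w : List A} :
    M.InfiniteOn w ↔ ∀ t, M.stepCfg (M.traj (M.initCfg w) t) ≠ none := by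
  refine ⟨fun h t hnone => ?_, fun h n => by rw [run_eq_some_traj fun t _ => h t]; rfl⟩
  obtain ⟨c, hc⟩ := Option.isSome_iff_exists.mp (h (t + 1))
  obtain ⟨c', hc', hstep⟩ := Option.bind_eq_some_iff.mp hc
  rw [eq_traj_of_run_eq_some hc', hnone] at hstep
  exact Option.some_ne_none c hstep.symm

theorem visits_nonempty_iff {w : List A} {i : ℤ} :
    (M.visits w i).Nonempty ↔ ∃ t, (M.traj (M.initCfg w) t).head = i := by
  constructor
  · rintro ⟨n, c, hc, rfl⟩
    exact ⟨n, by rw [eq_traj_of_run_eq_some hc]⟩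
  · rintro ⟨t, rfl⟩
    classical
    by_cases halive : ∀ s < t, M.stepCfg (M.traj (M.initCfg w) s) ≠ none
    · exact ⟨t, _, run_eq_some_traj halive, rfl⟩
    simp only [not_forall, not_not] at halive
    obtain ⟨s₀, hs₀, hhalt⟩ := halive
    have hex : ∃ s, M.stepCfg (M.traj (M.initCfg w) s) = none := ⟨s₀, hhalt⟩
    refine ⟨Nat.find hex, _, run_eq_some_traj fun s hs => Nat.find_min hex hs, ?_⟩
    rw [traj_eq_of_halted (Nat.find_spec hex) ((Nat.find_min' hex hhalt).trans hs₀.le)]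

theorem tape_stepOrStay_eq_or_lt {lt : Γ → Γ → Prop}
    (hδ : ∀ p σ q τ d, M.δ p σ = some (q, τ, d) → lt τ σ) (c : TMCfg Q Γ) (p : ℤ) :
    (M.stepOrStay c).tape p = c.tape p ∨ lt ((M.stepOrStay c).tape p) (c.tape p) := by
  by_cases hp : p = c.head
  · subst hp
    cases h : M.δ c.state (c.tape c.head) with
    | none => exact .inl (by rw [stepOrStay_of_δ_eq_none h])
    | some x =>
      obtain ⟨q, τ, dir⟩ := x
      exact .inr (by simpa [stepOrStay_of_δ_eq_some h] using hδ _ _ _ _ _ h)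
  · exact .inl (tape_stepOrStay_of_ne hp)

theorem tape_stepOrStay_head_lt {lt : Γ → Γ → Prop}
    (hδ : ∀ p σ q τ d, M.δ p σ = some (q, τ, d) → lt τ σ) {c : TMCfg Q Γ}
    (h : M.stepCfg c ≠ none) : lt ((M.stepOrStay c).tape c.head) (c.tape c.head) := by
  obtain ⟨⟨q, τ, dir⟩, hδc⟩ := Option.ne_none_iff_exists'.mp (mt stepCfg_eq_none_iff.mpr h)
  simpa [stepOrStay_of_δ_eq_some hδc] using hδ _ _ _ _ _ hδc

theorem tape_traj_lt_of_lt {lt : Γ → Γ → Prop} [IsTrans Γ lt]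
    (hδ : ∀ p σ q τ d, M.δ p σ = some (q, τ, d) → lt τ σ) {c : TMCfg Q Γ} {s t : ℕ}
    (hs : M.stepCfg (M.traj c s) ≠ none) (hst : s < t) :
    lt ((M.traj c t).tape (M.traj c s).head) ((M.traj c s).tape (M.traj c s).head) := by
  induction t, hst using Nat.le_induction with
  | base => exact tape_stepOrStay_head_lt hδ hs
  | succ t _ ih =>
    rcases tape_stepOrStay_eq_or_lt hδ (M.traj c t) (M.traj c s).head with h | h
    · rwa [traj, h]
    · exact _root_.trans h ih

def visitTimes (M : DTM A Q Γ) (c : TMCfg Q Γ) (T : ℕ) (b : ℤ) : List ℕ :=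
  (List.range (T + 1)).filter fun t => (M.traj c t).head = b

def visitStates (M : DTM A Q Γ) (c : TMCfg Q Γ) (T : ℕ) (b : ℤ) : List Q :=
  (M.visitTimes c T b).map fun t => (M.traj c t).state

theorem mem_visitTimes {c : TMCfg Q Γ} {T : ℕ} {b : ℤ} {t : ℕ} :
    t ∈ M.visitTimes c T b ↔ t ≤ T ∧ (M.traj c t).head = b := by
  simp [visitTimes]

theorem sortedLT_visitTimes (c : TMCfg Q Γ) (T : ℕ) (b : ℤ) : (M.visitTimes c T b).SortedLT :=
  ((List.sortedLT_range _).pairwise.filter _).sortedLT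

theorem length_visitTimes_le [Fintype Γ] (hwr : M.WeightReducing) {c : TMCfg Q Γ} {T : ℕ}
    (halive : ∀ t < T, M.stepCfg (M.traj c t) ≠ none) (b : ℤ) :
    (M.visitTimes c T b).length ≤ Fintype.card Γ := by
  obtain ⟨lt, hlt, hδ⟩ := hwr
  have hnodup : ((M.visitTimes c T b).map fun t => (M.traj c t).tape b).Nodup := by
    refine List.pairwise_map.mpr ((sortedLT_visitTimes c T b).pairwise.imp_of_mem ?_)
    intro s t hs ht hst heq
    rw [mem_visitTimes] at hs ht
    have hlt' := tape_traj_lt_of_lt hδ (halive s (by omega)) hst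
    rw [hs.2, heq] at hlt'
    exact irrefl _ hlt'
  simpa using hnodup.length_le_card

theorem not_forall_head_mem_Icc [Fintype Γ] (hwr : M.WeightReducing) {c : TMCfg Q Γ}
    (halive : ∀ t, M.stepCfg (M.traj c t) ≠ none) (lo hi : ℤ) :
    ¬ ∀ t, (M.traj c t).head ∈ Finset.Icc lo hi := by
  intro hmem
  set K := (Finset.Icc lo hi).card * Fintype.card Γ
  obtain ⟨b, -, hb⟩ := Finset.exists_lt_card_fiber_of_mul_lt_card_of_maps_to
    (s := Finset.range (K + 1)) (f := fun t => (M.traj c t).head) (n := Fintype.card Γ)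
    (fun t _ => hmem t) (by simp [K])
  have hfiber : {t ∈ Finset.range (K + 1) | (M.traj c t).head = b} =
      (M.visitTimes c K b).toFinset := by
    simp [visitTimes, List.toFinset_filter, List.toFinset_range]
  rw [hfiber] at hb
  exact (hb.trans_le ((List.toFinset_card_le _).trans
    (length_visitTimes_le hwr (fun t _ => halive t) b))).false

theorem exists_head_eq_or_exists_head_eq [Fintype Γ] (hwr : M.WeightReducing) {c : TMCfg Q Γ}
    (halive : ∀ t, M.stepCfg (M.traj c t) ≠ none) {lo hi : ℤ} (hlo : lo ≤ c.head)
    (hhi : c.head ≤ hi) : (∃ t, (M.traj c t).head = lo) ∨ ∃ t, (M.traj c t).head = hi := by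
  by_contra hnone
  simp only [not_or, not_exists] at hnone
  obtain ⟨hlo', hhi'⟩ := hnone
  refine not_forall_head_mem_Icc hwr halive (lo + 1) (hi - 1) fun t => Finset.mem_Icc.mpr ⟨?_, ?_⟩
  · have := (skipFree_head c).gt_of_forall_ne (lt_of_le_of_ne hlo fun h => hlo' 0 h.symm)
      (Nat.zero_le t) fun s _ _ => hlo' s
    omega
  · have := (skipFree_head c).lt_of_forall_ne (lt_of_le_of_ne hhi fun h => hhi' 0 h)
      (Nat.zero_le t) fun s _ _ => hhi' s
    omega

theorem tape_traj_eq_of_head_lt {c : TMCfg Q Γ} {b : ℤ} {u v : ℕ}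
    (hu : (M.traj c u).head < b) (huv : u ≤ v)
    (hne : ∀ s, u < s → s < v → (M.traj c s).head ≠ b) {p : ℤ} (hp : b ≤ p) :
    (M.traj c v).tape p = (M.traj c u).tape p :=
  tape_traj_eq_of_forall_head_ne huv fun s hus hsv =>
    (((skipFree_head c).lt_of_forall_ne hu hus fun s' h₁ h₂ => hne s' h₁ (by omega)).trans_le
      hp).ne

def IsNextVisit (M : DTM A Q Γ) (c : TMCfg Q Γ) (b : ℤ) (t t₁ : ℕ) : Prop :=
  t < t₁ ∧ (M.traj c t₁).head = b ∧ ∀ s, t < s → s < t₁ → (M.traj c s).head ≠ b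

structure ShiftAgree (b d : ℤ) (c₁ c₂ : TMCfg Q Γ) : Prop where
  state_eq : c₂.state = c₁.state
  head_eq : c₂.head = c₁.head + d
  tape_eq : ∀ p, b ≤ p → c₂.tape (p + d) = c₁.tape p

namespace ShiftAgree

variable {b d : ℤ} {c₁ c₂ : TMCfg Q Γ}

protected theorem stepOrStay (h : ShiftAgree b d c₁ c₂) (hb : b ≤ c₁.head) :
    ShiftAgree b d (M.stepOrStay c₁) (M.stepOrStay c₂) := by
  have hscan : c₂.tape c₂.head = c₁.tape c₁.head := by rw [h.head_eq]; exact h.tape_eq _ hb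
  have hδ : M.δ c₂.state (c₂.tape c₂.head) = M.δ c₁.state (c₁.tape c₁.head) := by
    rw [h.state_eq, hscan]
  cases h₁ : M.δ c₁.state (c₁.tape c₁.head) with
  | none => rwa [stepOrStay_of_δ_eq_none h₁, stepOrStay_of_δ_eq_none (hδ.trans h₁)]
  | some x =>
    obtain ⟨q, τ, dir⟩ := x
    rw [stepOrStay_of_δ_eq_some h₁, stepOrStay_of_δ_eq_some (hδ.trans h₁)]
    refine ⟨rfl, ?_, fun p hp => ?_⟩
    · cases dir <;> simp only [h.head_eq] <;> simp <;> ring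
    · simp only [Function.update_apply, h.head_eq, add_left_inj]
      split_ifs
      · rfl
      · exact h.tape_eq p hp

protected theorem traj (h : ShiftAgree b d c₁ c₂) {n : ℕ}
    (hb : ∀ j < n, b ≤ (M.traj c₁ j).head) : ShiftAgree b d (M.traj c₁ n) (M.traj c₂ n) := by
  induction n with
  | zero => exact h
  | succ n ih => exact (ih fun j hj => hb j (by omega)).stepOrStay (hb n (by omega))

end ShiftAgree

section VisitTimes

variable {c : TMCfg Q Γ} {T : ℕ} {b b' : ℤ}

theorem getElem_visitTimes_le {k : ℕ} (hk : k < (M.visitTimes c T b).length) :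
    (M.visitTimes c T b)[k] ≤ T :=
  (mem_visitTimes.mp (List.getElem_mem hk)).1

theorem head_getElem_visitTimes {k : ℕ} (hk : k < (M.visitTimes c T b).length) :
    (M.traj c (M.visitTimes c T b)[k]).head = b :=
  (mem_visitTimes.mp (List.getElem_mem hk)).2

theorem head_ne_of_lt_getElem_visitTimes_zero (h₀ : 0 < (M.visitTimes c T b).length) {s : ℕ}
    (hs : s < (M.visitTimes c T b)[0]) : (M.traj c s).head ≠ b := fun hsb =>
  (hs.trans_le ((sortedLT_visitTimes c T b).getElem_zero_le_of_mem h₀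
    (mem_visitTimes.mpr ⟨(hs.trans_le (getElem_visitTimes_le h₀)).le, hsb⟩))).false

theorem head_ne_of_lt_getElem_visitTimes_succ {k : ℕ} (hk : k + 1 < (M.visitTimes c T b).length)
    {s : ℕ} (h₁ : (M.visitTimes c T b)[k] < s) (h₂ : s < (M.visitTimes c T b)[k + 1]) :
    (M.traj c s).head ≠ b := fun hsb =>
  (h₂.trans_le ((sortedLT_visitTimes c T b).getElem_succ_le_of_mem hk
    (mem_visitTimes.mpr ⟨(h₂.trans_le (getElem_visitTimes_le hk)).le, hsb⟩) h₁)).false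

theorem isNextVisit_getElem_visitTimes {k : ℕ} (hk : k + 1 < (M.visitTimes c T b).length) :
    M.IsNextVisit c b (M.visitTimes c T b)[k] (M.visitTimes c T b)[k + 1] :=
  ⟨(sortedLT_visitTimes c T b).getElem_lt_getElem_iff.mpr (Nat.lt_succ_self k),
    head_getElem_visitTimes hk, fun _ h₁ h₂ => head_ne_of_lt_getElem_visitTimes_succ hk h₁ h₂⟩

theorem tape_getElem_visitTimes_zero (hhead : c.head ≤ b) (h₀ : 0 < (M.visitTimes c T b).length)
    {p : ℤ} (hp : b ≤ p) : (M.traj c (M.visitTimes c T b)[0]).tape p = c.tape p := by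
  rcases Nat.eq_zero_or_pos (M.visitTimes c T b)[0] with h | h
  · rw [h]; rfl
  · exact tape_traj_eq_of_head_lt
      (lt_of_le_of_ne hhead (head_ne_of_lt_getElem_visitTimes_zero h₀ h)) (Nat.zero_le _)
      (fun s _ hs => head_ne_of_lt_getElem_visitTimes_zero h₀ hs) hp

theorem length_visitTimes_eq (hS : M.visitStates c T b = M.visitStates c T b') :
    (M.visitTimes c T b).length = (M.visitTimes c T b').length := by
  simpa [visitStates] using congrArg List.length hS

theorem state_getElem_visitTimes_eq (hS : M.visitStates c T b = M.visitStates c T b') {k : ℕ}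
    (hk : k < (M.visitTimes c T b).length) (hk' : k < (M.visitTimes c T b').length) :
    (M.traj c (M.visitTimes c T b')[k]).state = (M.traj c (M.visitTimes c T b)[k]).state := by
  simpa [visitStates] using (List.getElem_of_eq hS (by simpa [visitStates] using hk)).symm

theorem shiftAgree_getElem_visitTimes_zero {i₀ : ℤ} (hblank : ∀ p, i₀ ≤ p → c.tape p = M.blank)
    (hhead : c.head ≤ i₀) (hb : i₀ ≤ b) (hb' : i₀ ≤ b')
    (hS : M.visitStates c T b = M.visitStates c T b') (h₀ : 0 < (M.visitTimes c T b).length)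
    (h₀' : 0 < (M.visitTimes c T b').length) :
    ShiftAgree b (b' - b) (M.traj c (M.visitTimes c T b)[0])
      (M.traj c (M.visitTimes c T b')[0]) :=
  ⟨state_getElem_visitTimes_eq hS h₀ h₀',
    by rw [head_getElem_visitTimes, head_getElem_visitTimes]; ring, fun p hp => by
    rw [tape_getElem_visitTimes_zero (hhead.trans hb') h₀' (by omega),
      tape_getElem_visitTimes_zero (hhead.trans hb) h₀ hp, hblank _ (by omega),
      hblank _ (by omega)]⟩

/-- Between two consecutive visits to `b` the head is either left of `b`, where it cannot touch
the cells from `b` on, or right of `b`, where the two computations run in lockstep. -/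
theorem ShiftAgree.of_isNextVisit {t t₁ t' t₁' : ℕ}
    (h : ShiftAgree b (b' - b) (M.traj c t) (M.traj c t')) (hbt : (M.traj c t).head = b)
    (hnext : M.IsNextVisit c b t t₁) (hnext' : M.IsNextVisit c b' t' t₁')
    (hstate : (M.traj c t₁').state = (M.traj c t₁).state) :
    ShiftAgree b (b' - b) (M.traj c t₁) (M.traj c t₁') := by
  obtain ⟨hlt, hb₁, hne⟩ := hnext
  obtain ⟨hlt', hb₁', hne'⟩ := hnext'
  have h₁ : ShiftAgree b (b' - b) (M.traj c (t + 1)) (M.traj c (t' + 1)) :=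
    h.stepOrStay (M := M) hbt.ge
  rcases lt_or_ge (M.traj c (t + 1)).head b with hleft | hright
  · refine ⟨hstate, by omega, fun p hp => ?_⟩
    have hleft' : (M.traj c (t' + 1)).head < b' := by rw [h₁.head_eq]; omega
    rw [tape_traj_eq_of_head_lt hleft' hlt' (fun s h₁ h₂ => hne' s (by omega) h₂) (by omega),
      tape_traj_eq_of_head_lt hleft hlt (fun s h₁ h₂ => hne s (by omega) h₂) hp]
    exact h₁.tape_eq p hp
  · have hstay : ∀ j < t₁ - t, b ≤ (M.traj (M.traj c t) j).head := by
      intro j hj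
      rw [← traj_add]
      rcases Nat.eq_zero_or_pos j with rfl | hj₀
      · exact hbt.ge
      · have hgt : b < (M.traj c (t + 1)).head :=
          lt_of_le_of_ne hright (hne (t + 1) (by omega) (by omega)).symm
        exact ((skipFree_head c).gt_of_forall_ne hgt (by omega)
          fun s h₁ h₂ => hne s (by omega) (by omega)).le
    have hshift : ∀ j ≤ t₁ - t, ShiftAgree b (b' - b) (M.traj c (t + j)) (M.traj c (t' + j)) :=
      fun j hj => by
        rw [traj_add, traj_add]
        exact h.traj fun i hi => hstay i (by omega)
    have hreturn : t' + (t₁ - t) = t₁' := by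
      have hle : t₁' ≤ t' + (t₁ - t) := by
        by_contra hgt
        have heq := (hshift (t₁ - t) le_rfl).head_eq
        rw [Nat.add_sub_cancel' hlt.le] at heq
        exact hne' (t' + (t₁ - t)) (by omega) (by omega) (by omega)
      by_contra hne₂
      have heq := (hshift (t₁' - t') (by omega)).head_eq
      rw [Nat.add_sub_cancel' hlt'.le] at heq
      exact hne (t + (t₁' - t')) (by omega) (by omega) (by omega)
    have := hshift _ le_rfl
    rwa [Nat.add_sub_cancel' hlt.le, hreturn] at this

theorem shiftAgree_getElem_visitTimes {i₀ : ℤ} (hblank : ∀ p, i₀ ≤ p → c.tape p = M.blank)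
    (hhead : c.head ≤ i₀) (hb : i₀ ≤ b) (hb' : i₀ ≤ b')
    (hS : M.visitStates c T b = M.visitStates c T b') :
    ∀ k (hk : k < (M.visitTimes c T b).length) (hk' : k < (M.visitTimes c T b').length),
      ShiftAgree b (b' - b) (M.traj c (M.visitTimes c T b)[k])
        (M.traj c (M.visitTimes c T b')[k])
  | 0, hk, hk' => shiftAgree_getElem_visitTimes_zero hblank hhead hb hb' hS hk hk'
  | k + 1, hk, hk' =>
    (shiftAgree_getElem_visitTimes hblank hhead hb hb' hS k (by omega) (by omega)).of_isNextVisit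
      (head_getElem_visitTimes _) (isNextVisit_getElem_visitTimes hk)
      (isNextVisit_getElem_visitTimes hk') (state_getElem_visitTimes_eq hS hk hk')

theorem exists_head_eq_add_of_visitStates_eq {i₀ : ℤ}
    (hblank : ∀ p, i₀ ≤ p → c.tape p = M.blank) (hhead : c.head ≤ i₀) (hb : i₀ ≤ b)
    (hb' : i₀ ≤ b') (hS : M.visitStates c T b = M.visitStates c T b') {t : ℕ} (ht : t ≤ T)
    (hbt : b ≤ (M.traj c t).head) :
    ∃ t', (M.traj c t').head = (M.traj c t).head + (b' - b) := by
  obtain ⟨u, hut, hu, hle⟩ := (skipFree_head c).exists_eq_forall_le (hhead.trans hb) hbt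
  obtain ⟨k, hk, rfl⟩ := List.getElem_of_mem (mem_visitTimes.mpr ⟨hut.trans ht, hu⟩)
  have hagree := (shiftAgree_getElem_visitTimes hblank hhead hb hb' hS k hk
    (by rwa [← length_visitTimes_eq hS])).traj (M := M) (n := t - (M.visitTimes c T b)[k])
    fun j hj => by rw [← traj_add]; exact hle _ (by omega) (by omega)
  rw [← traj_add, ← traj_add, Nat.add_sub_cancel' hut] at hagree
  exact ⟨_, hagree.head_eq⟩

end VisitTimes

theorem exists_le_traj_eq_of_halted {c : TMCfg Q Γ} {T : ℕ}
    (hT : M.stepCfg (M.traj c T) = none) (t : ℕ) : ∃ t₀ ≤ T, M.traj c t₀ = M.traj c t := by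
  rcases le_total t T with h | h
  exacts [⟨t, h, rfl⟩, ⟨T, le_rfl, (traj_eq_of_halted hT h).symm⟩]

theorem false_of_visitStates_eq {c : TMCfg Q Γ} {T : ℕ} (hT : M.stepCfg (M.traj c T) = none)
    {i₀ b b' : ℤ} (hblank : ∀ p, i₀ ≤ p → c.tape p = M.blank) (hhead : c.head ≤ i₀)
    (hb : i₀ ≤ b) (hbb' : b < b') (hS : M.visitStates c T b = M.visitStates c T b')
    (hvis : ∃ t, (M.traj c t).head = b') : False := by
  have hbound : ∀ t, (M.traj c t).head ≤ c.head + T := fun t => by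
    obtain ⟨t₀, ht₀, heq⟩ := exists_le_traj_eq_of_halted hT t
    rw [← heq]
    exact ((skipFree_head (M := M) c).le_add t₀).trans (by simp [traj, ht₀])
  have hiter : ∀ m : ℕ, ∃ t, (M.traj c t).head = b' + m * (b' - b) := by
    intro m
    induction m with
    | zero => simpa using hvis
    | succ m ih =>
      obtain ⟨t, ht⟩ := ih
      obtain ⟨t₀, ht₀, heq⟩ := exists_le_traj_eq_of_halted hT t
      obtain ⟨t', ht'⟩ := exists_head_eq_add_of_visitStates_eq hblank hhead hb (by omega) hS ht₀
        (by rw [heq, ht]; nlinarith)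
      exact ⟨t', by rw [ht', heq, ht]; push_cast; ring⟩
  obtain ⟨t, ht⟩ := hiter ((c.head + T - b').toNat + 1)
  have := hbound t
  push_cast at ht
  nlinarith [Int.self_le_toNat (c.head + T - b'), Int.natCast_nonneg (c.head + T - b').toNat]

theorem not_forall_visited_of_halts [Fintype Q] [Fintype Γ] (hwr : M.WeightReducing)
    {c : TMCfg Q Γ} (hhalt : ∃ T, M.stepCfg (M.traj c T) = none) {i₀ : ℤ}
    (hblank : ∀ p, i₀ ≤ p → c.tape p = M.blank) (hhead : c.head ≤ i₀) :
    ¬ ∀ j < (Fintype.card Q + 1) ^ Fintype.card Γ, ∃ t, (M.traj c t).head = i₀ + j := by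
  classical
  intro hvis
  -- The first halting time: every earlier step is a real one and rewrites the scanned cell.
  set T := Nat.find hhalt
  have hT : M.stepCfg (M.traj c T) = none := Nat.find_spec hhalt
  obtain ⟨a, a', haa', ha', hS⟩ := List.exists_lt_eq_of_forall_length_le
    (fun j => M.visitStates c T (i₀ + j)) fun j hj => by
      obtain ⟨t, ht⟩ := hvis j hj
      obtain ⟨t₀, ht₀, heq⟩ := exists_le_traj_eq_of_halted hT t
      refine ⟨?_, ?_⟩
      · simpa [visitStates, ← List.length_pos_iff, List.length_pos_iff_exists_mem] using
          ⟨t₀, mem_visitTimes.mpr ⟨ht₀, by rw [heq, ht]⟩⟩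
      · simpa [visitStates] using
          length_visitTimes_le hwr (fun t ht => Nat.find_min hhalt ht) (i₀ + j)
  exact false_of_visitStates_eq hT hblank hhead (by omega) (by omega) hS (hvis a' ha')

def _root_.TMCfg.mirror (c : TMCfg Q Γ) : TMCfg Q Γ := ⟨c.state, fun p => c.tape (-p), -c.head⟩

def mirror (M : DTM A Q Γ) : DTM A Q Γ :=
  { M with δ := fun q σ => (M.δ q σ).map fun t => (t.1, t.2.1, !t.2.2) }

theorem weightReducing_mirror (hwr : M.WeightReducing) : M.mirror.WeightReducing := by
  obtain ⟨lt, hlt, hδ⟩ := hwr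
  refine ⟨lt, hlt, fun p σ q τ dir h => ?_⟩
  obtain ⟨⟨q', τ', dir'⟩, h', heq⟩ := Option.map_eq_some_iff.mp h
  cases heq
  exact hδ _ _ _ _ _ h'

theorem stepCfg_mirror (c : TMCfg Q Γ) :
    M.mirror.stepCfg c.mirror = (M.stepCfg c).map TMCfg.mirror := by
  simp only [stepCfg, mirror, TMCfg.mirror, neg_neg]
  cases M.δ c.state (c.tape c.head) with
  | none => rfl
  | some x =>
    obtain ⟨q, τ, dir⟩ := x
    simp only [Option.map_some, Option.some_inj, TMCfg.mirror, TMCfg.mk.injEq, true_and]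
    constructor
    · funext p
      simp only [Function.update_apply, neg_eq_iff_eq_neg]
    · cases dir <;> simp <;> ring

theorem traj_mirror (c : TMCfg Q Γ) (n : ℕ) : M.mirror.traj c.mirror n = (M.traj c n).mirror := by
  induction n with
  | zero => rfl
  | succ n ih =>
    rw [traj, traj, ih, stepOrStay, stepOrStay, stepCfg_mirror]
    cases M.stepCfg (M.traj c n) <;> rfl

theorem not_forall_visited_left_of_halts [Fintype Q] [Fintype Γ] (hwr : M.WeightReducing)
    {c : TMCfg Q Γ} (hhalt : ∃ T, M.stepCfg (M.traj c T) = none) {i₀ : ℤ}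
    (hblank : ∀ p, p ≤ i₀ → c.tape p = M.blank) (hhead : i₀ ≤ c.head) :
    ¬ ∀ j < (Fintype.card Q + 1) ^ Fintype.card Γ, ∃ t, (M.traj c t).head = i₀ - j := by
  refine fun hvis => not_forall_visited_of_halts (weightReducing_mirror hwr) (c := c.mirror)
    (i₀ := -i₀) ?_ (fun p hp => hblank (-p) (by omega)) (by simp [TMCfg.mirror, hhead])
    fun j hj => ?_
  · obtain ⟨T, hT⟩ := hhalt
    exact ⟨T, by rw [traj_mirror, stepCfg_mirror, hT]; rfl⟩
  · obtain ⟨t, ht⟩ := hvis j hj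
    exact ⟨t, by rw [traj_mirror]; simp only [TMCfg.mirror, ht]; ring⟩

theorem initTape_of_length_le_s15 {w : List A} {p : ℤ} (hp : (w.length : ℤ) ≤ p) :
    M.initTape w p = M.blank := by
  rw [initTape, if_pos (by omega)]
  exact List.getD_eq_default _ _ (by simp; omega)

theorem initTape_of_neg_s15 {w : List A} {p : ℤ} (hp : p < 0) : M.initTape w p = M.blank := by
  rw [initTape, if_neg (by omega)]

end DTM

open DTM

/-- A computation of a weight-reducing DTM with `n` states and `g` working
symbols is infinite iff it visits `(n+1)^g` consecutive initially-blank cells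
on one side of the initial segment. -/
theorem stmt15 {A Q Γ : Type*} [Fintype Q] [Fintype Γ] (M : DTM A Q Γ)
    (hwr : M.WeightReducing) (w : List A) :
    M.InfiniteOn w ↔
      ((∀ j : ℕ, j < (Fintype.card Q + 1) ^ (Fintype.card Γ) →
          (M.visits w (-1 - (j : ℤ))).Nonempty) ∨
       (∀ j : ℕ, j < (Fintype.card Q + 1) ^ (Fintype.card Γ) →
          (M.visits w ((w.length : ℤ) + (j : ℤ))).Nonempty)) := by
  simp only [infiniteOn_iff, visits_nonempty_iff]
  constructor
  · intro halive
    by_contra hbounded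
    simp only [not_or, not_forall] at hbounded
    obtain ⟨⟨j₁, -, hleft⟩, ⟨j₂, -, hright⟩⟩ := hbounded
    rcases exists_head_eq_or_exists_head_eq hwr halive (lo := -1 - j₁) (hi := w.length + j₂)
      (by simp [initCfg]) (by simp [initCfg]; omega) with h | h
    exacts [hleft h, hright h]
  · intro hvis
    by_contra hhalt
    simp only [not_forall, not_not] at hhalt
    rcases hvis with hleft | hright
    · exact not_forall_visited_left_of_halts hwr hhalt
        (fun p hp => initTape_of_neg_s15 (by omega)) (by simp [initCfg]) hleft
    · exact not_forall_visited_of_halts hwr hhalt (fun p hp => initTape_of_length_le_s15 hp)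
        (by simp [initCfg]) hright
end
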